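/- arXiv:2012.11386 — 2 statements merged into one kernel-verified Lean document; each statement's English description precedes it below -/
import Mathlib

section
/- Let $X$ be a Banach space, $\alpha > 0$, $K \geq 1$, $0 \leq \delta < \frac{1-e^{-\alpha}}{1+e^{-\alpha}}$. Let $G : \mathbb{Z} \times \mathbb{Z} \to \mathcal{L}(X)$ satisfy $\|G(n,k)\| \leq K e^{-\alpha|n-k|}$ for all $n, k$. Let $B : \mathbb{Z} \to \mathcal{L}(X)$ with $\|B(k)\| \leq \delta K^{-1}$ for all $k$, and let $f \in \ell^\infty(\mathbb{Z}, X)$. Then the operator $\Gamma$ on $\ell^\infty(\mathbb{Z}, X)$ defined by $(\Gamma x)_n := \sum_{k=-\infty}^{+\infty} G(n,k+1)(B(k) x_k + f_k)$ is well-defined (maps $\ell^\infty$ into $\ell^\infty$) and is a contraction with Lipschitz constant at most $\delta \frac{1+e^{-\alpha}}{1-e^{-\alpha}} < 1$; in particular $\Gamma$ has a unique fixed point in $\ell^\infty(\mathbb{Z}, X)$. -/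
open scoped BoundedContinuousFunction

/-!
Write `r = e^{-α}`. The kernel bound `‖G(n,k)‖ ≤ K r^{|n-k|}` is summable in `k` uniformly in `n`,
with `∑_{j ∈ ℤ} r^{|j|} = (1+r)/(1-r)`, so `Γ` maps bounded sequences to bounded sequences. Since
`Γx - Γy = ∑_k G(n,k+1) B(k)(x_k - y_k)` and `‖B(k)‖ ≤ δ/K`, the factor `K` cancels and `Γ` is
Lipschitz with constant `δ(1+r)/(1-r)`, which is `< 1` exactly by the assumption on `δ`. Banach's
fixed point theorem in the complete space of bounded sequences then gives the unique fixed point.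
-/

theorem hasSum_pow_natAbs {r : ℝ} (hr0 : 0 ≤ r) (hr1 : r < 1) :
    HasSum (fun j : ℤ => r ^ j.natAbs) ((1 + r) / (1 - r)) := by
  have hgeom : HasSum (fun m : ℕ => r ^ m) (1 - r)⁻¹ := hasSum_geometric_of_lt_one hr0 hr1
  have hsum := HasSum.of_nat_of_neg (f := fun j : ℤ => r ^ j.natAbs)
    (by simpa using hgeom) (by simpa using hgeom)
  have hval : (1 - r)⁻¹ + (1 - r)⁻¹ - r ^ (0 : ℤ).natAbs = (1 + r) / (1 - r) := by
    have : 1 - r ≠ 0 := by linarith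
    field_simp
    ring
  rwa [hval] at hsum

theorem hasSum_pow_natAbs_sub {r : ℝ} (hr0 : 0 ≤ r) (hr1 : r < 1) (a : ℤ) :
    HasSum (fun k : ℤ => r ^ (a - k).natAbs) ((1 + r) / (1 - r)) :=
  (Equiv.subLeft a).hasSum_iff (f := fun j : ℤ => r ^ j.natAbs) |>.mpr (hasSum_pow_natAbs hr0 hr1)

theorem Real.exp_neg_mul_abs_eq_pow (α : ℝ) (m : ℤ) :
    Real.exp (-α * ((|m| : ℤ) : ℝ)) = Real.exp (-α) ^ m.natAbs := by
  rw [← Real.exp_nat_mul, Nat.cast_natAbs, mul_comm]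

section Kernel

variable {𝕜 E F : Type*} [NontriviallyNormedField 𝕜] [NormedAddCommGroup E] [NormedSpace 𝕜 E]
  [NormedAddCommGroup F] [NormedSpace 𝕜 F] {G : ℤ → ℤ → E →L[𝕜] F} {K r M : ℝ} {v : ℤ → E}

theorem norm_kernel_apply_le (hG : ∀ n k, ‖G n k‖ ≤ K * r ^ (n - k).natAbs)
    (hv : ∀ k, ‖v k‖ ≤ M) (n k : ℤ) :
    ‖G n (k + 1) (v k)‖ ≤ K * M * r ^ (n - 1 - k).natAbs := by
  have hidx : n - (k + 1) = n - 1 - k := by ring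
  calc ‖G n (k + 1) (v k)‖ ≤ K * r ^ (n - 1 - k).natAbs * M :=
        (G n (k + 1)).le_of_opNorm_le_of_le (hidx ▸ hG n (k + 1)) (hv k)
    _ = K * M * r ^ (n - 1 - k).natAbs := by ring

theorem summable_kernel_apply [CompleteSpace F] (hr0 : 0 ≤ r) (hr1 : r < 1)
    (hG : ∀ n k, ‖G n k‖ ≤ K * r ^ (n - k).natAbs) (hv : ∀ k, ‖v k‖ ≤ M) (n : ℤ) :
    Summable fun k : ℤ => G n (k + 1) (v k) :=
  .of_norm_bounded ((hasSum_pow_natAbs_sub hr0 hr1 (n - 1)).mul_left (K * M)).summable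
    (norm_kernel_apply_le hG hv n)

theorem norm_tsum_kernel_apply_le (hr0 : 0 ≤ r) (hr1 : r < 1)
    (hG : ∀ n k, ‖G n k‖ ≤ K * r ^ (n - k).natAbs) (hv : ∀ k, ‖v k‖ ≤ M) (n : ℤ) :
    ‖∑' k : ℤ, G n (k + 1) (v k)‖ ≤ K * M * ((1 + r) / (1 - r)) :=
  tsum_of_norm_bounded ((hasSum_pow_natAbs_sub hr0 hr1 (n - 1)).mul_left (K * M))
    (norm_kernel_apply_le hG hv n)

end Kernel

theorem norm_sub_le_iSup_norm_sub {ι X : Type*} [SeminormedAddCommGroup X] {x y : ι → X}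
    (hx : ∃ C, ∀ n, ‖x n‖ ≤ C) (hy : ∃ C, ∀ n, ‖y n‖ ≤ C) (k : ι) :
    ‖x k - y k‖ ≤ ⨆ m, ‖x m - y m‖ := by
  obtain ⟨Cx, hCx⟩ := hx
  obtain ⟨Cy, hCy⟩ := hy
  refine le_ciSup (f := fun m => ‖x m - y m‖) ⟨Cx + Cy, ?_⟩ k
  rintro _ ⟨m, rfl⟩
  exact (norm_sub_le _ _).trans (add_le_add (hCx m) (hCy m))

theorem existsUnique_bounded_fixedPoint {ι X : Type*} [NormedAddCommGroup X] [CompleteSpace X]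
    (Γ : (ι → X) → ι → X) {L : ℝ} (hL0 : 0 ≤ L) (hL1 : L < 1)
    (hbdd : ∀ x : ι → X, (∃ C, ∀ n, ‖x n‖ ≤ C) → ∃ C, ∀ n, ‖Γ x n‖ ≤ C)
    (hlip : ∀ x y : ι → X, (∃ C, ∀ n, ‖x n‖ ≤ C) → (∃ C, ∀ n, ‖y n‖ ≤ C) →
      ∀ n, ‖Γ x n - Γ y n‖ ≤ L * ⨆ m, ‖x m - y m‖) :
    ∃! x : ι → X, (∃ C, ∀ n, ‖x n‖ ≤ C) ∧ ∀ n, x n = Γ x n := by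
  let : TopologicalSpace ι := ⊥
  have : DiscreteTopology ι := ⟨rfl⟩
  have bounded (u : ι →ᵇ X) : ∃ C, ∀ n, ‖u n‖ ≤ C := ⟨‖u‖, u.norm_coe_le_norm⟩
  let Γb (u : ι →ᵇ X) : ι →ᵇ X :=
    .ofNormedAddCommGroupDiscrete (Γ u) _ (hbdd u (bounded u)).choose_spec
  have hcontr : ContractingWith L.toNNReal Γb := by
    refine ⟨by simpa using hL1, LipschitzWith.of_dist_le_mul fun u w => ?_⟩
    rw [Real.coe_toNNReal L hL0, BoundedContinuousFunction.dist_le (by positivity)]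
    intro n
    refine (dist_eq_norm _ _).trans_le ((hlip u w (bounded u) (bounded w) n).trans ?_)
    refine mul_le_mul_of_nonneg_left (Real.iSup_le (fun m => ?_) dist_nonneg) hL0
    exact (dist_eq_norm _ _).symm.trans_le (u.dist_coe_le_dist m)
  refine ⟨⇑(hcontr.fixedPoint Γb), ⟨bounded _, fun n => ?_⟩, ?_⟩
  · exact (congrFun (congrArg DFunLike.coe hcontr.fixedPoint_isFixedPt) n).symm
  · rintro y ⟨⟨C, hC⟩, hy⟩
    let yb : ι →ᵇ X := .ofNormedAddCommGroupDiscrete y C hC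
    have hyb : Function.IsFixedPt Γb yb := BoundedContinuousFunction.ext fun n => (hy n).symm
    exact congrArg DFunLike.coe (hcontr.fixedPoint_unique hyb)

section Perturbation

variable {𝕜 X : Type*} [NontriviallyNormedField 𝕜] [NormedAddCommGroup X] [NormedSpace 𝕜 X]
  {B : ℤ → X →L[𝕜] X} {f x : ℤ → X} {b : ℝ}

theorem exists_norm_perturbation_le (hB : ∀ k, ‖B k‖ ≤ b) (hf : ∃ C, ∀ n, ‖f n‖ ≤ C)
    (hx : ∃ C, ∀ n, ‖x n‖ ≤ C) : ∃ C, ∀ k, ‖B k (x k) + f k‖ ≤ C := by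
  obtain ⟨Cf, hCf⟩ := hf
  obtain ⟨Cx, hCx⟩ := hx
  exact ⟨b * Cx + Cf, fun k =>
    (norm_add_le _ _).trans (add_le_add ((B k).le_of_opNorm_le_of_le (hB k) (hCx k)) (hCf k))⟩

theorem norm_tsum_kernel_sub_tsum_kernel_le [CompleteSpace X] {G : ℤ → ℤ → X →L[𝕜] X} {y : ℤ → X}
    {K r δ : ℝ} (hK : K ≠ 0) (hr0 : 0 ≤ r) (hr1 : r < 1)
    (hG : ∀ n k, ‖G n k‖ ≤ K * r ^ (n - k).natAbs) (hB : ∀ k, ‖B k‖ ≤ δ * K⁻¹)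
    (hf : ∃ C, ∀ n, ‖f n‖ ≤ C) (hx : ∃ C, ∀ n, ‖x n‖ ≤ C) (hy : ∃ C, ∀ n, ‖y n‖ ≤ C) (n : ℤ) :
    ‖(∑' k : ℤ, G n (k + 1) (B k (x k) + f k)) - ∑' k : ℤ, G n (k + 1) (B k (y k) + f k)‖ ≤
      δ * (1 + r) / (1 - r) * ⨆ m, ‖x m - y m‖ := by
  obtain ⟨Cx, hCx⟩ := exists_norm_perturbation_le hB hf hx
  obtain ⟨Cy, hCy⟩ := exists_norm_perturbation_le hB hf hy
  have hsub : (∑' k : ℤ, G n (k + 1) (B k (x k) + f k)) -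
      ∑' k : ℤ, G n (k + 1) (B k (y k) + f k) = ∑' k : ℤ, G n (k + 1) (B k (x k - y k)) := by
    rw [← (summable_kernel_apply hr0 hr1 hG hCx n).tsum_sub
      (summable_kernel_apply hr0 hr1 hG hCy n)]
    refine tsum_congr fun k => ?_
    rw [← map_sub, add_sub_add_right_eq_sub, ← map_sub]
  have hdiff (k : ℤ) : ‖B k (x k - y k)‖ ≤ δ * K⁻¹ * ⨆ m, ‖x m - y m‖ :=
    (B k).le_of_opNorm_le_of_le (hB k) (norm_sub_le_iSup_norm_sub hx hy k)
  calc _ = ‖∑' k : ℤ, G n (k + 1) (B k (x k - y k))‖ := by rw [hsub]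
    _ ≤ K * (δ * K⁻¹ * ⨆ m, ‖x m - y m‖) * ((1 + r) / (1 - r)) :=
      norm_tsum_kernel_apply_le hr0 hr1 hG hdiff n
    _ = δ * (1 + r) / (1 - r) * ⨆ m, ‖x m - y m‖ := by field_simp

end Perturbation

/-- The operator `Γ` is well defined on `ℓ∞(ℤ,X)`, is a contraction with constant
`δ(1+e^{-α})/(1-e^{-α}) < 1`, and has a unique fixed point. -/
theorem stmt_2 {X : Type*} [NormedAddCommGroup X] [NormedSpace ℝ X] [CompleteSpace X]
    (α K δ : ℝ) (hα : 0 < α) (hK : 1 ≤ K)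
    (hδ0 : 0 ≤ δ) (hδ : δ < (1 - Real.exp (-α)) / (1 + Real.exp (-α)))
    (G : ℤ → ℤ → X →L[ℝ] X)
    (hG : ∀ n k : ℤ, ‖G n k‖ ≤ K * Real.exp (-α * ((|n - k| : ℤ) : ℝ)))
    (B : ℤ → X →L[ℝ] X) (hB : ∀ k, ‖B k‖ ≤ δ * K⁻¹)
    (f : ℤ → X) (hf : ∃ C, ∀ n, ‖f n‖ ≤ C) :
    (∀ x : ℤ → X, (∃ C, ∀ n, ‖x n‖ ≤ C) →
      (∀ n : ℤ, Summable fun k : ℤ => G n (k + 1) (B k (x k) + f k)) ∧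
      (∃ C, ∀ n : ℤ, ‖∑' k : ℤ, G n (k + 1) (B k (x k) + f k)‖ ≤ C)) ∧
    (∀ x y : ℤ → X, (∃ C, ∀ n, ‖x n‖ ≤ C) → (∃ C, ∀ n, ‖y n‖ ≤ C) → ∀ n : ℤ,
      ‖(∑' k : ℤ, G n (k + 1) (B k (x k) + f k)) -
          ∑' k : ℤ, G n (k + 1) (B k (y k) + f k)‖ ≤
        δ * (1 + Real.exp (-α)) / (1 - Real.exp (-α)) * ⨆ m : ℤ, ‖x m - y m‖) ∧
    δ * (1 + Real.exp (-α)) / (1 - Real.exp (-α)) < 1 ∧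
    (∃! x : ℤ → X, (∃ C, ∀ n, ‖x n‖ ≤ C) ∧
      ∀ n : ℤ, x n = ∑' k : ℤ, G n (k + 1) (B k (x k) + f k)) := by
  set r := Real.exp (-α)
  have hr0 : 0 ≤ r := (Real.exp_pos _).le
  have hr1 : r < 1 := Real.exp_lt_one_iff.mpr (by linarith)
  have hGr (n k : ℤ) : ‖G n k‖ ≤ K * r ^ (n - k).natAbs :=
    Real.exp_neg_mul_abs_eq_pow α (n - k) ▸ hG n k
  have hL1 : δ * (1 + r) / (1 - r) < 1 := by
    rw [div_lt_one (by linarith), ← lt_div_iff₀ (by positivity)]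
    exact hδ
  have hwd (x : ℤ → X) (hx : ∃ C, ∀ n, ‖x n‖ ≤ C) :
      (∀ n : ℤ, Summable fun k : ℤ => G n (k + 1) (B k (x k) + f k)) ∧
      (∃ C, ∀ n : ℤ, ‖∑' k : ℤ, G n (k + 1) (B k (x k) + f k)‖ ≤ C) := by
    obtain ⟨C, hC⟩ := exists_norm_perturbation_le hB hf hx
    exact ⟨summable_kernel_apply hr0 hr1 hGr hC, _, norm_tsum_kernel_apply_le hr0 hr1 hGr hC⟩
  have hlip := fun (x y : ℤ → X) (hx : ∃ C, ∀ n, ‖x n‖ ≤ C) (hy : ∃ C, ∀ n, ‖y n‖ ≤ C) =>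
    norm_tsum_kernel_sub_tsum_kernel_le (by positivity) hr0 hr1 hGr hB hf hx hy
  exact ⟨hwd, hlip, hL1, existsUnique_bounded_fixedPoint _ (by positivity) hL1
    (fun x hx => (hwd x hx).2) hlip⟩
end

section
/- Let $a > 0$ and $0 \leq \delta < \frac{1-e^{-a}}{1+e^{-a}}$. Then $\cosh^2 a - 1 - 2\delta \sinh a > 0$, and the quantity $\tilde{a} := -\ln(\cosh a - \sqrt{\cosh^2 a - 1 - 2\delta\sinh a})$ satisfies $0 < \tilde{a} \leq a$. -/
/-!
For `a > 0` the bound on `δ` says exactly `δ * sinh a < cosh a - 1`, because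
`(1 - e^{-a}) / (1 + e^{-a}) = (cosh a - 1) / sinh a = tanh (a / 2)`. With `D` the square root,
this gives `cosh a - 1 < D ≤ sinh a`, hence `e^{-a} = cosh a - sinh a ≤ cosh a - D < 1`.
-/

open Real

theorem cosh_sub_one_mul_one_add_exp_neg (a : ℝ) :
    (cosh a - 1) * (1 + exp (-a)) = sinh a * (1 - exp (-a)) := by
  have h : exp a * exp (-a) = 1 := by rw [← exp_add, add_neg_cancel, exp_zero]
  rw [cosh_eq, sinh_eq]
  linear_combination h

theorem mul_sinh_lt_cosh_sub_one {a δ : ℝ} (ha : 0 < a)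
    (hδ : δ < (1 - exp (-a)) / (1 + exp (-a))) : δ * sinh a < cosh a - 1 := by
  have hpos : 0 < 1 + exp (-a) := by positivity
  rw [← mul_lt_mul_iff_of_pos_right hpos, cosh_sub_one_mul_one_add_exp_neg]
  rw [lt_div_iff₀ hpos] at hδ
  calc δ * sinh a * (1 + exp (-a)) = sinh a * (δ * (1 + exp (-a))) := by ring
    _ < sinh a * (1 - exp (-a)) := mul_lt_mul_of_pos_left hδ (sinh_pos_iff.mpr ha)

theorem cosh_sub_one_lt_sqrt {a δ : ℝ} (h : δ * sinh a < cosh a - 1) :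
    cosh a - 1 < √(cosh a ^ 2 - 1 - 2 * δ * sinh a) := by
  rw [lt_sqrt (sub_nonneg.mpr (one_le_cosh a))]
  linarith

theorem sqrt_le_sinh {a δ : ℝ} (ha : 0 ≤ a) (hδ : 0 ≤ δ) :
    √(cosh a ^ 2 - 1 - 2 * δ * sinh a) ≤ sinh a := by
  have hs : 0 ≤ sinh a := sinh_nonneg_iff.mpr ha
  rw [sqrt_le_left hs, cosh_sq]
  nlinarith [mul_nonneg hδ hs]

/-- Well-definedness and bounds for the perturbed dichotomy exponent `ã`. -/
theorem stmt_10 (a δ : ℝ) (ha : 0 < a) (hδ0 : 0 ≤ δ)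
    (hδ : δ < (1 - Real.exp (-a)) / (1 + Real.exp (-a))) :
    0 < Real.cosh a ^ 2 - 1 - 2 * δ * Real.sinh a ∧
    0 < -Real.log (Real.cosh a - Real.sqrt (Real.cosh a ^ 2 - 1 - 2 * δ * Real.sinh a)) ∧
    -Real.log (Real.cosh a - Real.sqrt (Real.cosh a ^ 2 - 1 - 2 * δ * Real.sinh a)) ≤ a := by
  have hlower := cosh_sub_one_lt_sqrt (mul_sinh_lt_cosh_sub_one ha hδ)
  have hupper := sqrt_le_sinh ha.le hδ0
  have hexp : exp (-a) ≤ cosh a - √(cosh a ^ 2 - 1 - 2 * δ * sinh a) := by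
    rw [← cosh_sub_sinh]; linarith
  have hpos : 0 < cosh a - √(cosh a ^ 2 - 1 - 2 * δ * sinh a) := (exp_pos _).trans_le hexp
  refine ⟨sqrt_pos.mp ((sub_nonneg.mpr (one_le_cosh a)).trans_lt hlower), ?_, ?_⟩
  · exact neg_pos.mpr (log_neg hpos (by linarith))
  · have := log_le_log (exp_pos _) hexp
    rw [log_exp] at this
    linarith
end
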